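/- arXiv:2006.09702 — 3 statements merged into one kernel-verified Lean document; each statement's English description precedes it below -/
import Mathlib

section
/- Conditional mean shift under truncation: Let P be a distribution on ℝ with mean μ_P and E[(X − μ_P)²] ≤ σ_P², and let ε ∈ (0, 1/2]. Let P' be P conditioned on the event 𝓔 = {x : |x − μ_P| ≤ σ_P/√ε} (which has probability at least 1 − ε by Markov's inequality), and let μ_{P'} be the mean of P'. Then |μ_{P'} − μ_P| ≤ 2 √ε σ_P. -/
open MeasureTheory Matrix
open scoped BigOperators ENNReal NNReal

noncomputable section

/-- Squared Euclidean norm of a vector in `ℝ^d`. -/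
def enormSq {d : ℕ} (x : Fin d → ℝ) : ℝ := ∑ i, x i ^ 2

/-- Euclidean norm of a vector in `ℝ^d`. -/
def euclNorm {d : ℕ} (x : Fin d → ℝ) : ℝ := Real.sqrt (enormSq x)

/-- Frobenius norm of a matrix. -/
def frobNorm {m n : ℕ} (A : Matrix (Fin m) (Fin n) ℝ) : ℝ :=
  Real.sqrt (∑ i, ∑ j, A i j ^ 2)

/-- Spectral norm (ℓ₂ operator norm) of a square matrix. -/
def specNorm {d : ℕ} (A : Matrix (Fin d) (Fin d) ℝ) : ℝ :=
  ‖Matrix.toEuclideanCLM (𝕜 := ℝ) A‖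

/-- Nuclear norm: the sum of the singular values. -/
def nucNorm {d : ℕ} (A : Matrix (Fin d) (Fin d) ℝ) : ℝ :=
  ∑ i, Real.sqrt ((Matrix.isHermitian_conjTranspose_mul_self A).eigenvalues i)

open scoped Classical in
/-- Best rank-`k` approximation of a symmetric matrix: keep the `k` largest eigenvalues
(ties broken by index) in an eigendecomposition; junk value `0` on non-symmetric input. -/
def Pk {d : ℕ} (k : ℕ) (A : Matrix (Fin d) (Fin d) ℝ) : Matrix (Fin d) (Fin d) ℝ :=
  if hA : A.IsHermitian then
    (hA.eigenvectorUnitary : Matrix (Fin d) (Fin d) ℝ) *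
      Matrix.diagonal (fun i =>
        if (Finset.univ.filter fun j =>
              hA.eigenvalues i < hA.eigenvalues j ∨
                (hA.eigenvalues i = hA.eigenvalues j ∧ j < i)).card < k
        then hA.eigenvalues i else 0) *
      star (hA.eigenvectorUnitary : Matrix (Fin d) (Fin d) ℝ)
  else 0

/-- A `d × k` matrix is semi-orthogonal if `Vᵀ V = I_k`. -/
def IsSemiOrtho {d k : ℕ} (V : Matrix (Fin d) (Fin k) ℝ) : Prop := Vᵀ * V = 1

/-- `U` is a matrix of top-`k` singular vectors of the positive semidefinite matrix `M`:
it is semi-orthogonal and maximizes `Tr(Vᵀ M V)` among semi-orthogonal matrices. -/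
def IsTopKSingular {d k : ℕ} (M : Matrix (Fin d) (Fin d) ℝ)
    (U : Matrix (Fin d) (Fin k) ℝ) : Prop :=
  IsSemiOrtho U ∧ ∀ V : Matrix (Fin d) (Fin k) ℝ, IsSemiOrtho V →
    (Vᵀ * M * V).trace ≤ (Uᵀ * M * U).trace

/-- `s` is an `α`-corruption of the sample `g`: as multisets, `s = (g \ L) ∪ E`
with `L ⊆ g` and `|E| = |L| ≤ α n`. -/
def IsCorruptionOf {V : Type*} (α : ℝ) {n : ℕ} (g s : Fin n → V) : Prop :=
  ∃ L E : Multiset V, L ≤ (List.ofFn g : Multiset V) ∧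
    Multiset.card E = Multiset.card L ∧ (Multiset.card L : ℝ) ≤ α * n ∧
    (List.ofFn s : Multiset V) + L = (List.ofFn g : Multiset V) + E

/-- The standard Gaussian measure `N(0, I_d)` on `ℝ^d`. -/
def stdGaussian (d : ℕ) : Measure (Fin d → ℝ) :=
  Measure.pi fun _ => ProbabilityTheory.gaussianReal 0 1

/-- Total variation distance between two measures. -/
def tvDist {Ω : Type*} [MeasurableSpace Ω] (μ ν : Measure Ω) : ℝ :=
  ⨆ s : Set Ω, |(μ s).toReal - (ν s).toReal|
/-- Matrices over `ℝ` carry the Borel (product) σ-algebra. -/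
instance matrixMeasurableSpace {m n : ℕ} : MeasurableSpace (Matrix (Fin m) (Fin n) ℝ) :=
  (inferInstance : MeasurableSpace (Fin m → Fin n → ℝ))

/-! Write `Y = X - μP` and `c = σP / √ε`. Chebyshev gives `P(|Y| > c) ≤ σP² / c² = ε`, so the
event has probability at least `1 - ε ≥ 1/2`. Since `E[Y] = 0`, the conditional mean of `Y` is
`-E[Y; |Y| > c] / P(|Y| ≤ c)`, and on the tail `|Y| ≤ Y² / c`, whence
`|E[Y; |Y| > c]| ≤ σP² / c = √ε σP`. -/

open ProbabilityTheory

section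

variable {Ω : Type*} [MeasurableSpace Ω] {μ : Measure Ω} {g : Ω → ℝ} {c : ℝ}

lemma sq_mul_measureReal_lt_abs_le [IsFiniteMeasure μ] (hc : 0 ≤ c)
    (hg2 : Integrable (fun x => g x ^ 2) μ) :
    c ^ 2 * μ.real {x | c < |g x|} ≤ ∫ x, g x ^ 2 ∂μ := by
  have hsub : {x | c < |g x|} ⊆ {x | c ^ 2 ≤ g x ^ 2} := fun x (hx : c < |g x|) => by
    simpa only [Set.mem_ofPred_eq, sq_abs] using pow_le_pow_left₀ hc hx.le 2
  calc c ^ 2 * μ.real {x | c < |g x|} ≤ c ^ 2 * μ.real {x | c ^ 2 ≤ g x ^ 2} :=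
        mul_le_mul_of_nonneg_left (measureReal_mono hsub) (sq_nonneg c)
    _ ≤ ∫ x, g x ^ 2 ∂μ :=
        mul_meas_ge_le_integral_of_nonneg (ae_of_all _ fun x => sq_nonneg _) hg2 _

lemma mul_abs_setIntegral_lt_abs_le (hc : 0 ≤ c) (hg : Measurable g) (hg1 : Integrable g μ)
    (hg2 : Integrable (fun x => g x ^ 2) μ) :
    c * |∫ x in {x | c < |g x|}, g x ∂μ| ≤ ∫ x, g x ^ 2 ∂μ := by
  have hA : MeasurableSet {x | c < |g x|} := measurableSet_lt measurable_const hg.abs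
  calc c * |∫ x in {x | c < |g x|}, g x ∂μ| ≤ c * ∫ x in {x | c < |g x|}, |g x| ∂μ := by
        gcongr; exact abs_integral_le_integral_abs
    _ = ∫ x in {x | c < |g x|}, c * |g x| ∂μ := (integral_const_mul _ _).symm
    _ ≤ ∫ x in {x | c < |g x|}, g x ^ 2 ∂μ := by
        refine setIntegral_mono_on (hg1.abs.const_mul c).integrableOn hg2.integrableOn hA
          fun x (hx : c < |g x|) => ?_
        rw [← sq_abs]
        nlinarith [abs_nonneg (g x)]
    _ ≤ ∫ x, g x ^ 2 ∂μ :=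
        setIntegral_le_integral hg2 (ae_of_all _ fun x => sq_nonneg _)

lemma integral_cond_eq_neg_setIntegral_compl {s : Set Ω} (hs : MeasurableSet s)
    (hg1 : Integrable g μ) (hmean : ∫ x, g x ∂μ = 0) :
    ∫ x, g x ∂μ[|s] = -((μ.real s)⁻¹ * ∫ x in sᶜ, g x ∂μ) := by
  have hsplit := integral_add_compl hs hg1
  rw [ProbabilityTheory.cond, integral_smul_measure, ENNReal.toReal_inv, smul_eq_mul,
    ← measureReal_def, show ∫ x in s, g x ∂μ = -∫ x in sᶜ, g x ∂μ by linarith, mul_neg]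

lemma MeasureTheory.Integrable.cond (hg1 : Integrable g μ) (s : Set Ω) :
    Integrable g μ[|s] := by
  by_cases hs : μ s = 0
  · simp [cond_eq_zero_of_meas_eq_zero hs]
  · exact hg1.integrableOn.smul_measure (ENNReal.inv_ne_top.2 hs)

variable [IsProbabilityMeasure μ] {σ ε : ℝ}

lemma integral_sub_const (hg1 : Integrable g μ) (c : ℝ) :
    ∫ x, (g x - c) ∂μ = ∫ x, g x ∂μ - c := by
  simp [integral_sub hg1 (integrable_const c)]

lemma cond_eq_self_of_ae_mem {s : Set Ω} (h : ∀ᵐ x ∂μ, x ∈ s) :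
    μ[|s] = μ := by
  have hres := Measure.restrict_eq_self_of_ae_mem h
  have hs : μ s = 1 := by rw [← Measure.restrict_apply_univ, hres, measure_univ]
  rw [ProbabilityTheory.cond, hs, hres, inv_one, one_smul]

lemma one_sub_le_measureReal_truncation (hσ : 0 < σ) (hε : 0 < ε) (hg : Measurable g)
    (hg2 : Integrable (fun x => g x ^ 2) μ) (hvar : ∫ x, g x ^ 2 ∂μ ≤ σ ^ 2) :
    1 - ε ≤ μ.real {x | |g x| ≤ σ / √ε} := by
  have hc : 0 < σ / √ε := by positivity
  have hσsq : σ ^ 2 = (σ / √ε) ^ 2 * ε := by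
    rw [div_pow, Real.sq_sqrt hε.le, div_mul_cancel₀ _ hε.ne']
  have hcheb := (sq_mul_measureReal_lt_abs_le hc.le hg2).trans (hvar.trans_eq hσsq)
  have htail : μ.real {x | σ / √ε < |g x|} ≤ ε := le_of_mul_le_mul_left hcheb (by positivity)
  have hs : MeasurableSet {x | |g x| ≤ σ / √ε} := measurableSet_le hg.abs measurable_const
  have hcompl := probReal_compl_eq_one_sub (μ := μ) hs
  simp only [Set.compl_ofPred, not_le] at hcompl
  linarith

theorem abs_integral_cond_truncation_le (hσ : 0 < σ) (hε : 0 < ε) (hε_half : ε ≤ 1 / 2)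
    (hg : Measurable g) (hg1 : Integrable g μ) (hmean : ∫ x, g x ∂μ = 0)
    (hg2 : Integrable (fun x => g x ^ 2) μ) (hvar : ∫ x, g x ^ 2 ∂μ ≤ σ ^ 2) :
    |∫ x, g x ∂μ[|{x | |g x| ≤ σ / √ε}]| ≤ 2 * √ε * σ := by
  set c := σ / √ε
  have hc : 0 < c := by positivity
  set s := {x | |g x| ≤ c}
  have hmass : 2⁻¹ ≤ μ.real s := by
    linarith [one_sub_le_measureReal_truncation hσ hε hg hg2 hvar]
  have hshift : |∫ x in sᶜ, g x ∂μ| ≤ √ε * σ := by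
    have hσsq : σ ^ 2 = c * (√ε * σ) := by
      rw [← mul_assoc, div_mul_cancel₀ _ (Real.sqrt_pos.2 hε).ne', sq]
    have := (mul_abs_setIntegral_lt_abs_le hc.le hg hg1 hg2).trans (hvar.trans_eq hσsq)
    simp only [s, Set.compl_ofPred, not_le]
    exact le_of_mul_le_mul_left this hc
  rw [integral_cond_eq_neg_setIntegral_compl (measurableSet_le hg.abs measurable_const) hg1 hmean,
    abs_neg, abs_mul, abs_inv, abs_of_pos (by linarith)]
  calc (μ.real s)⁻¹ * |∫ x in sᶜ, g x ∂μ| ≤ 2 * (√ε * σ) := by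
        gcongr
        exact inv_le_of_inv_le₀ two_pos hmass
    _ = 2 * √ε * σ := by ring

end

/-- **Conditional mean shift under truncation.** Conditioning a distribution with mean
`μP` and second central moment at most `σP²` on the event `{|x − μP| ≤ σP/√ε}` shifts
the mean by at most `2 √ε σP`. -/
theorem conditional_mean_shift
    (P : Measure ℝ) [IsProbabilityMeasure P] (μP σP ε : ℝ)
    (hσ : 0 ≤ σP) (hε0 : 0 < ε) (hε1 : ε ≤ 1 / 2)
    (hint : Integrable (fun x : ℝ => x) P) (hmean : (∫ x, x ∂P) = μP)
    (hint2 : Integrable (fun x : ℝ => (x - μP) ^ 2) P)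
    (hvar : (∫ x, (x - μP) ^ 2 ∂P) ≤ σP ^ 2) :
    |(∫ x, x ∂(ProbabilityTheory.cond P {x : ℝ | |x - μP| ≤ σP / Real.sqrt ε})) - μP| ≤
      2 * Real.sqrt ε * σP := by
  set s := {x : ℝ | |x - μP| ≤ σP / √ε}
  rcases hσ.eq_or_lt with rfl | hσ
  · -- here `x = μP` almost surely, so `s` is conull and conditioning on it changes nothing
    have hsq : (fun x => (x - μP) ^ 2) =ᵐ[P] 0 :=
      (integral_eq_zero_iff_of_nonneg (fun x => sq_nonneg _) hint2).1
        (le_antisymm (by simpa using hvar) (integral_nonneg fun x => sq_nonneg _))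
    have hs : ∀ᵐ x ∂P, x ∈ s := hsq.mono fun x hx => by simpa [s, sub_eq_zero] using hx
    simp [cond_eq_self_of_ae_mem hs, hmean]
  have hmass := one_sub_le_measureReal_truncation (g := fun x => x - μP) hσ hε0
    (measurable_id.sub_const μP) hint2 hvar
  have : IsProbabilityMeasure P[|s] :=
    cond_isProbabilityMeasure ((measureReal_ne_zero_iff).1 (by linarith))
  rw [← integral_sub_const (hint.cond s)]
  exact abs_integral_cond_truncation_le hσ hε0 hε1 (measurable_id.sub_const μP)
    (hint.sub (integrable_const μP)) (by rw [integral_sub_const hint, hmean, sub_self]) hint2 hvar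

end
end

section
/- Deterministic resilience of PSD trace sums: Let X₁,…,X_n ∈ ℝ^{d×d} be positive semidefinite, let M ∈ ℝ^{d×d} be positive semidefinite, let V ∈ ℝ^{d×k} be semi-orthogonal, and let ν > 0, ε ∈ (0,1]. Write z_i = Tr(Vᵀ(X_i − M)V). Assume |Σ_{i=1}^n z_i| ≤ n ν√(kε), and assume that the index set G_M = {i : |z_i| ≤ 3ν√(k/ε)} satisfies |{1,…,n} \ G_M| ≤ εn and |Σ_{i∈G_M} z_i| ≤ 2 n ν√(kε). Then every subset T ⊆ {1,…,n} with |T| ≤ εn satisfies Σ_{i∈T} z_i ≤ 6 n ν√(kε) + n ε Tr(Vᵀ M V). -/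
open MeasureTheory Matrix
open scoped BigOperators ENNReal NNReal

noncomputable section

/-
Each `z i = Tr(Vᵀ X_i V) - Tr(Vᵀ M V)` is bounded below by `-Tr(Vᵀ M V)`. Split a small set `T`
along `G_M`. On `T ∩ G_M` every term is at most `3ν√(k/ε)` and there are at most `εn` of them,
giving `3nν√(kε)`. The terms on `T \ G_M` are at most the sum over the whole complement `B` of
`G_M` plus `|B| Tr(Vᵀ M V)` (the lower bound absorbs `B \ T`), and the sum over `B` equals
`∑ z - ∑_{G_M} z ≤ 3nν√(kε)`.
-/

lemma Matrix.PosSemidef.trace_transpose_mul_mul_nonneg {m n : Type*} [Fintype m] [Fintype n]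
    {A : Matrix n n ℝ} (hA : A.PosSemidef) (V : Matrix n m ℝ) : 0 ≤ (Vᵀ * A * V).trace := by
  simpa [conjTranspose_eq_transpose_of_trivial] using
    (hA.conjTranspose_mul_mul_same V).trace_nonneg

lemma Matrix.PosSemidef.neg_trace_le_trace_transpose_mul_sub_mul {m n : Type*} [Fintype m]
    [Fintype n] {X : Matrix n n ℝ} (hX : X.PosSemidef) (M : Matrix n n ℝ) (V : Matrix n m ℝ) :
    -(Vᵀ * M * V).trace ≤ (Vᵀ * (X - M) * V).trace := by
  rw [Matrix.mul_sub, Matrix.sub_mul, trace_sub]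
  linarith [hX.trace_transpose_mul_mul_nonneg V]

lemma Real.mul_sqrt_div_self {ε : ℝ} (hε : 0 ≤ ε) (k : ℝ) : ε * √(k / ε) = √(k * ε) := by
  rw [← Real.sqrt_sq hε, ← Real.sqrt_mul (sq_nonneg ε), Real.sqrt_sq hε]
  congr 1
  rcases hε.eq_or_lt with rfl | hε
  · simp
  · field_simp

namespace Finset

variable {ι : Type*} [DecidableEq ι]

lemma sum_inter_le_mul_of_le {s t : Finset ι} {f : ι → ℝ} {c r : ℝ} (hc : 0 ≤ c)
    (hf : ∀ i ∈ t, f i ≤ c) (hs : (#s : ℝ) ≤ r) : ∑ i ∈ s ∩ t, f i ≤ r * c := by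
  calc ∑ i ∈ s ∩ t, f i ≤ #(s ∩ t) • c :=
        sum_le_card_nsmul _ _ _ fun i hi ↦ hf i (mem_inter.mp hi).2
    _ ≤ r * c := by
        rw [nsmul_eq_mul]
        gcongr
        exact (Nat.cast_le.mpr (card_le_card inter_subset_left)).trans hs

lemma sum_le_sum_add_card_mul_of_subset {s t : Finset ι} (hst : s ⊆ t) {f : ι → ℝ} {m : ℝ}
    (hm : 0 ≤ m) (hf : ∀ i ∈ t, -m ≤ f i) : ∑ i ∈ s, f i ≤ ∑ i ∈ t, f i + #t * m := by
  have hrest : -(#(t \ s) * m) ≤ ∑ i ∈ t \ s, f i := by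
    simpa using card_nsmul_le_sum (t \ s) f (-m) fun i hi ↦ hf i (mem_sdiff.mp hi).1
  have hcard : (#(t \ s) : ℝ) * m ≤ #t * m :=
    mul_le_mul_of_nonneg_right (by exact_mod_cast card_le_card sdiff_subset) hm
  have hsplit := sum_sdiff (f := f) hst
  linarith

end Finset

theorem deterministic_resilience_general
    {d k n : ℕ} (X : Fin n → Matrix (Fin d) (Fin d) ℝ) (hX : ∀ i, (X i).PosSemidef)
    (M : Matrix (Fin d) (Fin d) ℝ) (hM : M.PosSemidef)
    (V : Matrix (Fin d) (Fin k) ℝ)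
    (ν ε : ℝ) (hν : 0 < ν) (hε0 : 0 < ε)
    (z : Fin n → ℝ) (hz : ∀ i, z i = (Vᵀ * (X i - M) * V).trace)
    (hsum : |∑ i, z i| ≤ n * ν * Real.sqrt (k * ε))
    (GM : Finset (Fin n)) (hGM : ∀ i, i ∈ GM ↔ |z i| ≤ 3 * ν * Real.sqrt (k / ε))
    (hGMc : ((Finset.univ \ GM).card : ℝ) ≤ ε * n)
    (hGMsum : |∑ i ∈ GM, z i| ≤ 2 * n * ν * Real.sqrt (k * ε)) :
    ∀ T : Finset (Fin n), (T.card : ℝ) ≤ ε * n →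
      ∑ i ∈ T, z i ≤ 6 * n * ν * Real.sqrt (k * ε) + n * ε * (Vᵀ * M * V).trace := by
  intro T hT
  set m := (Vᵀ * M * V).trace
  have hm : 0 ≤ m := hM.trace_transpose_mul_mul_nonneg V
  have hgood : ∑ i ∈ T ∩ GM, z i ≤ 3 * n * ν * √(k * ε) := by
    refine (Finset.sum_inter_le_mul_of_le (by positivity)
      (fun i hi ↦ (le_abs_self _).trans ((hGM i).mp hi)) hT).trans_eq ?_
    rw [← Real.mul_sqrt_div_self hε0.le]
    ring
  have hbad : ∑ i ∈ T \ GM, z i ≤ ∑ i ∈ Finset.univ \ GM, z i + n * ε * m := by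
    refine (Finset.sum_le_sum_add_card_mul_of_subset (Finset.sdiff_subset_sdiff
      (Finset.subset_univ T) le_rfl) hm fun i _ ↦ ?_).trans (by rw [mul_comm (n : ℝ)]; gcongr)
    exact hz i ▸ (hX i).neg_trace_le_trace_transpose_mul_sub_mul M V
  have hcompl := Finset.sum_sdiff (f := z) (Finset.subset_univ GM)
  rw [← Finset.sum_inter_add_sum_sdiff T GM z]
  linarith [abs_le.mp hsum, abs_le.mp hGMsum]

/-- **Deterministic resilience of PSD trace sums.** If the total trace sum and the
trace sum over the "bounded" indices `G_M` are controlled, then the trace sum over any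
`εn`-small subset is at most `6 n ν √(kε) + n ε Tr(Vᵀ M V)`. -/
theorem deterministic_resilience
    {d k n : ℕ} (X : Fin n → Matrix (Fin d) (Fin d) ℝ) (hX : ∀ i, (X i).PosSemidef)
    (M : Matrix (Fin d) (Fin d) ℝ) (hM : M.PosSemidef)
    (V : Matrix (Fin d) (Fin k) ℝ) (hV : IsSemiOrtho V)
    (ν ε : ℝ) (hν : 0 < ν) (hε0 : 0 < ε) (hε1 : ε ≤ 1)
    (z : Fin n → ℝ) (hz : ∀ i, z i = (Vᵀ * (X i - M) * V).trace)
    (hsum : |∑ i, z i| ≤ n * ν * Real.sqrt (k * ε))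
    (GM : Finset (Fin n)) (hGM : ∀ i, i ∈ GM ↔ |z i| ≤ 3 * ν * Real.sqrt (k / ε))
    (hGMc : ((Finset.univ \ GM).card : ℝ) ≤ ε * n)
    (hGMsum : |∑ i ∈ GM, z i| ≤ 2 * n * ν * Real.sqrt (k * ε)) :
    ∀ T : Finset (Fin n), (T.card : ℝ) ≤ ε * n →
      ∑ i ∈ T, z i ≤ 6 * n * ν * Real.sqrt (k * ε) + n * ε * (Vᵀ * M * V).trace :=
  deterministic_resilience_general X hX M hM V ν ε hν hε0 z hz hsum GM hGM hGMc hGMsum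
end
end

section
/- Moments of the centered normalized chi-square average: Let Z₁,…,Z_t be i.i.d. standard Gaussian N(0,1) random variables and, for an integer i ≥ 1, set M_i = E[((1/t) Σ_{j=1}^t (Z_j² − 1))^i]. Then for all integers m, i, t with 1 ≤ i ≤ 2m ≤ t, one has M_i ≤ 2 e^{2i} · i^{i/2} / t^{i/2}. -/
open MeasureTheory Matrix
open scoped BigOperators ENNReal NNReal

noncomputable section

/-
The moment generating function of `Z² - 1` is `e^{-c} / √(1 - 2c)`, which is at most
`e^{8c²}` for `c ≤ 3/8`; by independence `S = ∑ (Z_j² - 1)` has `E e^{±λS} ≤ e^{8λ²t}`. Since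
`|S|^i ≤ i! λ^{-i} (e^{λS} + e^{-λS})`, taking `λ = √i / (4√t)` (admissible as `i ≤ t`) gives
`E S^i ≤ 2 e^{i/2} 4^i i! (t/i)^{i/2}`, and `i! ≤ i^i`, `4 ≤ e^{3/2}` finish the bound.
-/

open ProbabilityTheory Real
open scoped Nat

-- For `c ≥ 1 / 2` both sides are junk zeros: the integral diverges and `√(1 - 2c) = 0`.
lemma mgf_sq_sub_one_gaussianReal (c : ℝ) :
    mgf (fun x => x ^ 2 - 1) (gaussianReal 0 1) c = exp (-c) / √(1 - 2 * c) := by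
  have hpdf : ∀ x, gaussianPDFReal 0 1 x * exp (c * (x ^ 2 - 1))
      = exp (-c) * (√(2 * π))⁻¹ * exp (-(1 / 2 - c) * x ^ 2) := by
    intro x
    simp only [gaussianPDFReal, NNReal.coe_one, mul_one, sub_zero]
    rw [mul_assoc, ← exp_add, mul_comm (exp (-c)), mul_assoc, ← exp_add]
    ring_nf
  rw [mgf, integral_gaussianReal_eq_integral_smul one_ne_zero]
  simp_rw [smul_eq_mul, hpdf, integral_const_mul, integral_gaussian]
  rw [mul_assoc, ← sqrt_inv, ← sqrt_mul (by positivity), div_eq_mul_inv (exp (-c)),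
    ← sqrt_inv]
  congr 2
  field_simp

lemma integrable_exp_mul_sq_sub_one_gaussianReal {c : ℝ} (hc : c < 1 / 2) :
    Integrable (fun x => exp (c * (x ^ 2 - 1))) (gaussianReal 0 1) :=
  .of_integral_ne_zero <| by
    rw [← mgf, mgf_sq_sub_one_gaussianReal]
    have : 0 < 1 - 2 * c := by linarith
    positivity

lemma exp_neg_div_sqrt_one_sub_two_mul_le {c : ℝ} (hc : c ≤ 3 / 8) :
    exp (-c) / √(1 - 2 * c) ≤ exp (8 * c ^ 2) := by
  have hpos : 0 < 1 + (2 * c + 16 * c ^ 2) := by nlinarith [sq_nonneg (4 * c + 1 / 4)]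
  -- `exp (-y) ≤ 1 / (1 + y)` at `y = 2c + 16c²`, and `(1 - 2c)(1 + y) = 1 + 4c²(3 - 8c) ≥ 1`
  have hsq : exp (-c - 8 * c ^ 2) ≤ √(1 - 2 * c) := by
    refine le_sqrt_of_sq_le ?_
    rw [← exp_nat_mul, show ((2 : ℕ) : ℝ) * (-c - 8 * c ^ 2) = -(2 * c + 16 * c ^ 2) by ring,
      exp_neg, inv_le_comm₀ (exp_pos _) (by nlinarith)]
    refine le_trans ?_ (add_one_le_exp _)
    rw [inv_le_iff_one_le_mul₀ (by nlinarith)]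
    nlinarith [sq_nonneg c]
  calc exp (-c) / √(1 - 2 * c) ≤ exp (-c) / exp (-c - 8 * c ^ 2) := by gcongr
    _ = exp (8 * c ^ 2) := by rw [← exp_sub]; ring_nf

section Pi

variable {ι E : Type*} [Fintype ι] [MeasurableSpace E] {μ : Measure E} [SigmaFinite μ]
  {f : E → ℝ} {c : ℝ}

lemma integrable_exp_mul_sum_pi (hf : Integrable (fun x => exp (c * f x)) μ) :
    Integrable (fun ω : ι → E => exp (c * ∑ j, f (ω j))) (Measure.pi fun _ => μ) := by
  simp_rw [Finset.mul_sum, exp_sum]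
  exact .fintype_prod fun _ => hf

lemma mgf_sum_pi :
    mgf (fun ω : ι → E => ∑ j, f (ω j)) (Measure.pi fun _ => μ) c
      = mgf f μ c ^ Fintype.card ι := by
  simp_rw [mgf, Finset.mul_sum, exp_sum]
  exact integral_fintype_prod_eq_pow (fun x => exp (c * f x))

end Pi

lemma abs_pow_le_factorial_div_pow_mul_exp_add_exp {l : ℝ} (hl : 0 < l) (x : ℝ) (n : ℕ) :
    |x| ^ n ≤ n ! / l ^ n * (exp (l * x) + exp (-l * x)) := by
  have hexp : exp (l * |x|) ≤ exp (l * x) + exp (-l * x) := by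
    rcases abs_cases x with ⟨hx, -⟩ | ⟨hx, -⟩ <;> rw [hx]
    · linarith [exp_pos (-l * x)]
    · rw [mul_neg, ← neg_mul]; linarith [exp_pos (l * x)]
  calc |x| ^ n = n ! / l ^ n * ((l * |x|) ^ n / n !) := by
        rw [mul_pow]; field_simp
    _ ≤ n ! / l ^ n * (exp (l * x) + exp (-l * x)) := by
        gcongr
        exact (pow_div_factorial_le_exp _ (by positivity) n).trans hexp

lemma integral_pow_le_factorial_div_pow_mul_mgf_add_mgf_neg {Ω : Type*} [MeasurableSpace Ω]
    {μ : Measure Ω} {X : Ω → ℝ} (hX : AEStronglyMeasurable X μ) {l : ℝ} (hl : 0 < l)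
    (hpos : Integrable (fun ω => exp (l * X ω)) μ)
    (hneg : Integrable (fun ω => exp (-l * X ω)) μ)
    (n : ℕ) : ∫ ω, X ω ^ n ∂μ ≤ n ! / l ^ n * (mgf X μ l + mgf X μ (-l)) := by
  have hbound : ∀ ω, |X ω| ^ n ≤ n ! / l ^ n * (exp (l * X ω) + exp (-l * X ω)) :=
    fun ω => abs_pow_le_factorial_div_pow_mul_exp_add_exp hl (X ω) n
  have hint : Integrable (fun ω => n ! / l ^ n * (exp (l * X ω) + exp (-l * X ω))) μ :=
    (hpos.add hneg).const_mul _
  have hXn : Integrable (fun ω => X ω ^ n) μ :=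
    hint.mono' (hX.pow n) <| ae_of_all _ fun ω => by
      simpa only [norm_pow, norm_eq_abs] using hbound ω
  rw [mgf, mgf, ← integral_add hpos hneg, ← integral_const_mul]
  exact integral_mono hXn hint fun ω => (le_abs_self _).trans (abs_pow (X ω) n ▸ hbound ω)

lemma mgf_sum_sq_sub_one_gaussian_le (t : ℕ) {c : ℝ} (hc : c ≤ 3 / 8) :
    mgf (fun ω : Fin t → ℝ => ∑ j, (ω j ^ 2 - 1)) (Measure.pi fun _ => gaussianReal 0 1) c
      ≤ exp (8 * c ^ 2 * t) := by
  rw [mgf_sum_pi (f := fun x => x ^ 2 - 1), Fintype.card_fin, mul_comm, exp_nat_mul]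
  gcongr
  · exact mgf_nonneg
  · exact mgf_sq_sub_one_gaussianReal c ▸ exp_neg_div_sqrt_one_sub_two_mul_le hc

lemma integral_sum_sq_sub_one_pow_le (t n : ℕ) {l : ℝ} (hl : 0 < l) (hl' : l ≤ 3 / 8) :
    ∫ ω, (∑ j, (ω j ^ 2 - 1)) ^ n ∂(Measure.pi fun _ : Fin t => gaussianReal 0 1)
      ≤ n ! / l ^ n * (2 * exp (8 * l ^ 2 * t)) := by
  have hint : ∀ c : ℝ, c < 1 / 2 →
      Integrable (fun ω : Fin t → ℝ => exp (c * ∑ j, (ω j ^ 2 - 1)))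
        (Measure.pi fun _ => gaussianReal 0 1) :=
    fun c hc => integrable_exp_mul_sum_pi (integrable_exp_mul_sq_sub_one_gaussianReal hc)
  have hS : Measurable fun ω : Fin t → ℝ => ∑ j, (ω j ^ 2 - 1) := by fun_prop
  refine (integral_pow_le_factorial_div_pow_mul_mgf_add_mgf_neg hS.aestronglyMeasurable hl
    (hint l (by linarith)) (hint (-l) (by linarith)) n).trans ?_
  have hpos := mgf_sum_sq_sub_one_gaussian_le t hl'
  have hneg := mgf_sum_sq_sub_one_gaussian_le t (c := -l) (by linarith)
  rw [neg_sq] at hneg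
  gcongr
  linarith

lemma integral_sum_sq_sub_one_pow_le_of_le {t i : ℕ} (hi : 0 < i) (hit : i ≤ t) :
    ∫ ω, (∑ j, (ω j ^ 2 - 1)) ^ i ∂(Measure.pi fun _ : Fin t => gaussianReal 0 1)
      ≤ 2 * (4 ^ i * exp (i / 2)) * i ! * √t ^ i / √i ^ i := by
  have hi0 : (0 : ℝ) < i := by exact_mod_cast hi
  have ht0 : (0 : ℝ) < t := by exact_mod_cast hi.trans_le hit
  set l := √i / (4 * √t) with hl
  have hl0 : 0 < l := by positivity
  have hl38 : l ≤ 3 / 8 := by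
    rw [hl, div_le_iff₀ (by positivity)]
    nlinarith [sqrt_le_sqrt (Nat.cast_le.2 hit : (i : ℝ) ≤ t), sqrt_pos.2 ht0]
  have hexp : 8 * l ^ 2 * t = i / 2 := by
    rw [hl, div_pow, mul_pow, sq_sqrt hi0.le, sq_sqrt ht0.le]
    field_simp
    ring
  calc _ ≤ i ! / l ^ i * (2 * exp (8 * l ^ 2 * t)) :=
        integral_sum_sq_sub_one_pow_le t i hl0 hl38
    _ = 2 * (4 ^ i * exp (i / 2)) * i ! * √t ^ i / √i ^ i := by
        rw [hexp, hl, div_pow, mul_pow]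
        field_simp

lemma four_le_exp_three_halves : (4 : ℝ) ≤ exp (3 / 2) := by
  have he := exp_one_gt_d9
  have hhalf := add_one_le_exp (1 / 2)
  rw [show (3 / 2 : ℝ) = 1 + 1 / 2 by norm_num, exp_add]
  nlinarith [exp_pos 1]

/-- **Moments of the centered normalized chi-square average.** For i.i.d. standard
Gaussians `Z₁,…,Z_t` and `M_i = E[((1/t)∑(Z_j² − 1))^i]`, if `1 ≤ i ≤ 2m ≤ t` then
`M_i ≤ 2 e^{2i} i^{i/2} / t^{i/2}`. -/
theorem chisq_centered_moments
    (m i t : ℕ) (hi : 1 ≤ i) (him : i ≤ 2 * m) (hmt : 2 * m ≤ t) :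
    (∫ ω : Fin t → ℝ, ((t : ℝ)⁻¹ * ∑ j, (ω j ^ 2 - 1)) ^ i
        ∂(Measure.pi fun _ : Fin t => ProbabilityTheory.gaussianReal 0 1)) ≤
      2 * Real.exp (2 * i) * (i : ℝ) ^ ((i : ℝ) / 2) / (t : ℝ) ^ ((i : ℝ) / 2) := by
  have hit : i ≤ t := him.trans hmt
  have hi0 : (0 : ℝ) < i := by exact_mod_cast hi
  have ht0 : (0 : ℝ) < t := by exact_mod_cast hi.trans hit
  have hfact : (i ! : ℝ) ≤ (√i ^ i) ^ 2 := by
    rw [← pow_mul, mul_comm, pow_mul, sq_sqrt hi0.le]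
    exact_mod_cast Nat.factorial_le_pow i
  have htinv : (t : ℝ)⁻¹ ^ i = (√t ^ i * √t ^ i)⁻¹ := by
    rw [← mul_pow, mul_self_sqrt ht0.le, inv_pow]
  simp_rw [mul_pow, integral_const_mul]
  rw [rpow_div_two_eq_sqrt _ hi0.le, rpow_div_two_eq_sqrt _ ht0.le, rpow_natCast, rpow_natCast,
    htinv]
  calc _ ≤ (√t ^ i * √t ^ i)⁻¹ * (2 * (4 ^ i * exp (i / 2)) * i ! * √t ^ i / √i ^ i) := by
        gcongr
        exact integral_sum_sq_sub_one_pow_le_of_le hi hit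
    _ ≤ (√t ^ i * √t ^ i)⁻¹ *
          (2 * (exp (3 / 2) ^ i * exp (i / 2)) * (√i ^ i) ^ 2 * √t ^ i / √i ^ i) := by
        gcongr
        exact four_le_exp_three_halves
    _ = 2 * exp (2 * i) * √i ^ i / √t ^ i := by
        rw [← exp_nat_mul, ← exp_add, show i * (3 / 2) + i / 2 = 2 * (i : ℝ) by ring]
        field_simp

end
end
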